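/- Let n ≥ 2 and m ≥ 1 be integers, let i be an integer with 0 ≤ i ≤ m−1, let u_j(s) = cosh(s)^j · sinh(s)^{2−n−m} for s > 0, and let κ_j = (m−j−1)(m+n−2−j). Then for every s > 0, applying successively the operators (κ_{i−2} − 𝒟_m), (κ_{i−4} − 𝒟_m), …, (κ_{i−2⌊i/2⌋} − 𝒟_m) (in this order, (κ_{i−2} − 𝒟_m) applied first; the empty composition when i ≤ 1) to u_i yields a strictly positive value: ((κ_{i−2⌊i/2⌋} − 𝒟_m) ∘ ⋯ ∘ (κ_{i−2} − 𝒟_m)) u_i (s) > 0. -/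

import Mathlib

/-!
Write `u_j = cosh^j · sinh^(2-n-m)`. A direct computation gives
`𝒟_m u_j = κ_j u_j - j(j-1) u_{j-2}`, hence `(κ - 𝒟_m) u_j = (κ - κ_j) u_j + j(j-1) u_{j-2}`.
Since `κ_j` is strictly decreasing for `j ≤ m - 1` and `j(j-1) ≥ 0` for every integer `j`,
the operator `κ_{i-2p} - 𝒟_m` maps a combination of `u_i, u_{i-2}, …, u_{i-2(p-1)}` with
nonnegative coefficients into a combination of `u_i, …, u_{i-2p}` of the same kind, and it
multiplies the coefficient of `u_i` by `κ_{i-2p} - κ_i > 0`. As every `u_j` is positive on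
`(0, ∞)`, so is the result, whatever the number of operators applied.
-/

/-- The second-order operator `𝒟_k f (s) = f''(s) + (n-1)·coth(s)·f'(s)
    - (k(k+n-2)/sinh²(s))·f(s)`. -/
noncomputable def Dop (n k : ℤ) (f : ℝ → ℝ) : ℝ → ℝ := fun s =>
  deriv (deriv f) s + ((n : ℝ) - 1) * (Real.cosh s / Real.sinh s) * deriv f s
    - ((k : ℝ) * ((k : ℝ) + (n : ℝ) - 2) / (Real.sinh s) ^ 2) * f s

/-- `(c - 𝒟_k) f = c·f - 𝒟_k f`. -/
noncomputable def Bop (n k : ℤ) (c : ℝ) (f : ℝ → ℝ) : ℝ → ℝ := fun s =>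
  c * f s - Dop n k f s

/-- `chainB n m κ i q` is the composition
    `(κ_{i-2q} - 𝒟_m) ∘ ⋯ ∘ (κ_{i-4} - 𝒟_m) ∘ (κ_{i-2} - 𝒟_m)`,
    i.e. the operators `(κ_{i-2p} - 𝒟_m)` for `p = 1, …, q`, with `p = 1` applied first;
    the empty composition (`q = 0`) is the identity. -/
noncomputable def chainB (n m : ℤ) (κ : ℤ → ℝ) (i : ℤ) : ℕ → (ℝ → ℝ) → (ℝ → ℝ)
  | 0 => id
  | q + 1 => fun f => Bop n m (κ (i - 2 * ((q : ℤ) + 1))) (chainB n m κ i q f)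

open Real Filter Topology Finset

section Dop

variable {n k : ℤ}

theorem Dop_congr {f g : ℝ → ℝ} {s : ℝ} (h : f =ᶠ[𝓝 s] g) : Dop n k f s = Dop n k g s := by
  simp only [Dop, h.eq_of_nhds, h.deriv_eq, h.deriv.deriv_eq]

theorem Dop_sum {ι : Type*} (t : Finset ι) (a : ι → ℝ) (f : ι → ℝ → ℝ) {s : ℝ}
    (hf : ∀ r ∈ t, ∀ᶠ x in 𝓝 s, DifferentiableAt ℝ (f r) x)
    (hf' : ∀ r ∈ t, DifferentiableAt ℝ (deriv (f r)) s) :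
    Dop n k (fun x => ∑ r ∈ t, a r * f r x) s = ∑ r ∈ t, a r * Dop n k (f r) s := by
  have hderiv : deriv (fun x => ∑ r ∈ t, a r * f r x) =ᶠ[𝓝 s]
      fun x => ∑ r ∈ t, a r * deriv (f r) x := by
    filter_upwards [(eventually_all_finset t).2 hf] with x hx
    rw [deriv_fun_sum fun r hr => (hx r hr).const_mul (a r)]
    exact sum_congr rfl fun r hr => deriv_const_mul _ (hx r hr)
  have hderiv2 : deriv (deriv (fun x => ∑ r ∈ t, a r * f r x)) s
      = ∑ r ∈ t, a r * deriv (deriv (f r)) s := by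
    rw [hderiv.deriv_eq, deriv_fun_sum fun r hr => (hf' r hr).const_mul (a r)]
    exact sum_congr rfl fun r hr => deriv_const_mul _ (hf' r hr)
  simp only [Dop, hderiv2, hderiv.eq_of_nhds, mul_sum, ← sum_add_distrib, ← sum_sub_distrib]
  exact sum_congr rfl fun r _ => by ring

end Dop

theorem Int.mul_sub_one_nonneg (j : ℤ) : 0 ≤ j * (j - 1) := by
  rcases le_or_gt j 0 with h | h <;> nlinarith

def kappa (n m j : ℤ) : ℤ := (m - j - 1) * (m + n - 2 - j)

theorem kappa_strictAntiOn {n m : ℤ} (hn : 0 < n) :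
    StrictAntiOn (kappa n m) (Set.Iic (m - 1)) := by
  intro j hj j' hj' hlt
  simp only [Set.mem_Iic] at hj hj'
  have : 0 < (j' - j) * (2 * m + n - 3 - j - j') := mul_pos (by omega) (by omega)
  simp only [kappa]
  nlinarith

noncomputable def csPow (j b : ℤ) (x : ℝ) : ℝ := cosh x ^ j * sinh x ^ b

noncomputable def csPowLogDeriv (j b : ℤ) (x : ℝ) : ℝ :=
  j * (sinh x / cosh x) + b * (cosh x / sinh x)

section csPow

variable {j b : ℤ} {x : ℝ}

theorem csPow_pos (hx : 0 < x) : 0 < csPow j b x :=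
  mul_pos (zpow_pos (cosh_pos x) j) (zpow_pos (sinh_pos_iff.mpr hx) b)

theorem csPow_sub_two : csPow (j - 2) b x = csPow j b x / cosh x ^ 2 := by
  rw [csPow, csPow, zpow_sub₀ (cosh_pos x).ne']
  simp only [zpow_ofNat]
  ring

theorem hasDerivAt_csPow (hx : x ≠ 0) :
    HasDerivAt (csPow j b) (csPow j b x * csPowLogDeriv j b x) x := by
  have hsinh : sinh x ≠ 0 := sinh_ne_zero.mpr hx
  have hcosh : cosh x ≠ 0 := (cosh_pos x).ne'
  refine (((hasDerivAt_zpow j _ (.inl hcosh)).comp x (hasDerivAt_cosh x)).fun_mul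
    ((hasDerivAt_zpow b _ (.inl hsinh)).comp x (hasDerivAt_sinh x))).congr_deriv ?_
  simp only [csPow, csPowLogDeriv, Function.comp_apply, zpow_sub_one₀ hcosh, zpow_sub_one₀ hsinh]
  field_simp

theorem hasDerivAt_csPowLogDeriv (hx : x ≠ 0) :
    HasDerivAt (csPowLogDeriv j b) (j / cosh x ^ 2 - b / sinh x ^ 2) x := by
  have hsinh : sinh x ≠ 0 := sinh_ne_zero.mpr hx
  have hcosh : cosh x ≠ 0 := (cosh_pos x).ne'
  refine ((((hasDerivAt_sinh x).fun_div (hasDerivAt_cosh x) hcosh).const_mul (j : ℝ)).fun_add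
    (((hasDerivAt_cosh x).fun_div (hasDerivAt_sinh x) hsinh).const_mul (b : ℝ))).congr_deriv ?_
  field_simp
  linear_combination (j * sinh x ^ 2 - b * cosh x ^ 2) * cosh_sq x

theorem deriv_csPow_eventuallyEq (hx : x ≠ 0) :
    deriv (csPow j b) =ᶠ[𝓝 x] fun y => csPow j b y * csPowLogDeriv j b y :=
  eventually_of_mem (isOpen_ne.mem_nhds hx) fun _ hy => (hasDerivAt_csPow hy).deriv

theorem hasDerivAt_deriv_csPow (hx : x ≠ 0) :
    HasDerivAt (deriv (csPow j b))
      (csPow j b x * (csPowLogDeriv j b x ^ 2 + (j / cosh x ^ 2 - b / sinh x ^ 2))) x := by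
  refine (((hasDerivAt_csPow hx).fun_mul (hasDerivAt_csPowLogDeriv hx)).congr_deriv ?_)
    |>.congr_of_eventuallyEq (deriv_csPow_eventuallyEq hx)
  ring

theorem Dop_csPow {n m : ℤ} (hx : x ≠ 0) :
    Dop n m (csPow j (2 - n - m)) x
      = kappa n m j * csPow j (2 - n - m) x - j * (j - 1) * csPow (j - 2) (2 - n - m) x := by
  have hsinh : sinh x ≠ 0 := sinh_ne_zero.mpr hx
  have hcosh : cosh x ≠ 0 := (cosh_pos x).ne'
  rw [Dop, (hasDerivAt_deriv_csPow hx).deriv, (hasDerivAt_csPow hx).deriv, csPow_sub_two,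
    csPowLogDeriv, kappa]
  field_simp
  push_cast
  -- the two sides differ by a multiple of `cosh² - sinh² - 1`
  linear_combination csPow j (2 - n - m) x * ((2 - n - m) * (1 - m) * (cosh x ^ 2 + sinh x ^ 2 + 1)
    + 2 * j * (2 - n - m) * sinh x ^ 2 - (2 - n - m) + (n - 1) * j * sinh x ^ 2
    - m * (m + n - 2) - sinh x ^ 2 * ((m - j - 1) * (m + n - 2 - j))) * cosh_sq x

end csPow

def shiftSeq (β : ℕ → ℝ) : ℕ → ℝ
  | 0 => 0
  | r + 1 => β r

theorem sum_add_sum_shift_eq (α β w : ℕ → ℝ) (N : ℕ) (hα : α N = 0) :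
    ∑ r ∈ range N, α r * w r + ∑ r ∈ range N, β r * w (r + 1)
      = ∑ r ∈ range (N + 1), (α r + shiftSeq β r) * w r := by
  simp only [add_mul, sum_add_distrib]
  rw [sum_range_succ _ N, hα, sum_range_succ' _ N]
  simp [shiftSeq]

theorem Dop_sum_csPow {n m : ℤ} {ι : Type*} (t : Finset ι) (a : ι → ℝ) (j : ι → ℤ) {f : ℝ → ℝ}
    (hf : Set.EqOn f (fun x => ∑ r ∈ t, a r * csPow (j r) (2 - n - m) x) (Set.Ioi 0))
    {s : ℝ} (hs : 0 < s) :
    Dop n m f s = ∑ r ∈ t, a r * (kappa n m (j r) * csPow (j r) (2 - n - m) s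
      - j r * (j r - 1) * csPow (j r - 2) (2 - n - m) s) := by
  rw [Dop_congr (hf.eventuallyEq_of_mem (Ioi_mem_nhds hs)), Dop_sum t a _
    (fun r _ => eventually_of_mem (isOpen_ne.mem_nhds hs.ne')
      fun _ hy => (hasDerivAt_csPow hy).differentiableAt)
    (fun r _ => (hasDerivAt_deriv_csPow hs.ne').differentiableAt)]
  exact sum_congr rfl fun r _ => by rw [Dop_csPow hs.ne']

theorem chainB_csPow_eqOn_sum {n m i : ℤ} (hn : 0 < n) (him : i ≤ m - 1) (q : ℕ) :
    ∃ a : ℕ → ℝ, 0 < a 0 ∧ (∀ r ≤ q, 0 ≤ a r) ∧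
      Set.EqOn (chainB n m (fun j => (kappa n m j : ℝ)) i q (csPow i (2 - n - m)))
        (fun x => ∑ r ∈ range (q + 1), a r * csPow (i - 2 * r) (2 - n - m) x) (Set.Ioi 0) := by
  induction q with
  | zero => exact ⟨fun _ => 1, one_pos, fun _ _ => zero_le_one, fun x _ => by simp [chainB]⟩
  | succ q ih =>
    obtain ⟨a, ha0, ha, hf⟩ := ih
    have hκ_le : ∀ r ≤ q + 1, kappa n m (i - 2 * r) ≤ kappa n m (i - 2 * (q + 1)) := fun r hr =>
      (kappa_strictAntiOn hn).antitoneOn (by simp; omega) (by simp; omega) (by omega)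
    set κ' : ℝ := (kappa n m (i - 2 * (q + 1)) : ℝ)
    set α : ℕ → ℝ := fun r => (κ' - kappa n m (i - 2 * r)) * a r with hα
    set β : ℕ → ℝ := fun r => ((i - 2 * r) * (i - 2 * r - 1) : ℤ) * a r with hβ
    set w : ℕ → ℝ → ℝ := fun r => csPow (i - 2 * r) (2 - n - m)
    refine ⟨fun r => α r + shiftSeq β r, ?_, fun r hr => ?_, fun x hx => ?_⟩
    · have : kappa n m i < kappa n m (i - 2 * (q + 1)) :=
        kappa_strictAntiOn hn (by simp; omega) (by simp; omega) (by omega)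
      simp only [hα, shiftSeq, add_zero]
      exact mul_pos (by simpa [κ'] using this) ha0
    · have hshift : 0 ≤ shiftSeq β r := by
        cases r with
        | zero => exact le_rfl
        | succ p =>
          exact mul_nonneg (by exact_mod_cast Int.mul_sub_one_nonneg _) (ha p (by omega))
      have hα_nonneg : 0 ≤ α r := by
        rcases hr.lt_or_eq with hr | rfl
        · exact mul_nonneg (by simpa [κ'] using hκ_le r hr.le) (ha r (by omega))
        · simp [hα, κ']
      exact add_nonneg hα_nonneg hshift
    · have hlast : α (q + 1) = 0 := by simp [hα, κ']
      calc chainB n m (fun j => (kappa n m j : ℝ)) i (q + 1) (csPow i (2 - n - m)) x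
          = κ' * chainB n m (fun j => (kappa n m j : ℝ)) i q (csPow i (2 - n - m)) x
            - Dop n m (chainB n m (fun j => (kappa n m j : ℝ)) i q (csPow i (2 - n - m))) x := rfl
        _ = ∑ r ∈ range (q + 1), α r * w r x + ∑ r ∈ range (q + 1), β r * w (r + 1) x := by
          rw [hf hx, Dop_sum_csPow _ _ _ hf hx, mul_sum, ← sum_sub_distrib, ← sum_add_distrib]
          refine sum_congr rfl fun r _ => ?_
          simp only [hα, hβ, w,
            show i - 2 * (r : ℤ) - 2 = i - 2 * ((r + 1 : ℕ) : ℤ) by push_cast; ring]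
          push_cast
          ring
        _ = ∑ r ∈ range (q + 2), (α r + shiftSeq β r) * w r x :=
          sum_add_sum_shift_eq α β (fun r => w r x) (q + 1) hlast

theorem chainB_csPow_pos {n m i : ℤ} (hn : 0 < n) (him : i ≤ m - 1) (q : ℕ) {s : ℝ}
    (hs : 0 < s) :
    0 < chainB n m (fun j => (kappa n m j : ℝ)) i q (csPow i (2 - n - m)) s := by
  obtain ⟨a, ha0, ha, hf⟩ := chainB_csPow_eqOn_sum hn him q
  rw [hf hs]
  refine sum_pos' (fun r hr => mul_nonneg (ha r ?_) (csPow_pos hs).le)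
    ⟨0, by simp, mul_pos ha0 (csPow_pos hs)⟩
  simpa [Nat.lt_succ_iff] using hr

theorem stmt_7_general (n m : ℤ) (hn : 2 ≤ n)
    (i : ℤ) (him : i ≤ m - 1)
    (u : ℤ → ℝ → ℝ)
    (hu : ∀ (j : ℤ) (s : ℝ), u j s = Real.cosh s ^ j * Real.sinh s ^ (2 - n - m))
    (κ : ℤ → ℝ) (hκ : ∀ j : ℤ, κ j = ((m - j - 1) * (m + n - 2 - j) : ℤ))
    (s : ℝ) (hs : 0 < s) :
    0 < chainB n m κ i (i / 2).toNat (u i) s := by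
  obtain rfl : κ = fun j => (kappa n m j : ℝ) := funext hκ
  rw [show u i = csPow i (2 - n - m) from funext (hu i)]
  exact chainB_csPow_pos (by omega) him _ hs

/-- The positivity claim in the proof of Lemma `L:Ind`:
    `((κ_{i-2⌊i/2⌋} - 𝒟_m) ∘ ⋯ ∘ (κ_{i-2} - 𝒟_m)) u_i (s) > 0`,
    where `u_j(s) = cosh^j(s) sinh^{2-n-m}(s)` and `κ_j = (m-j-1)(m+n-2-j)`. -/
theorem stmt_7 (n m : ℤ) (hn : 2 ≤ n) (hm : 1 ≤ m)
    (i : ℤ) (hi0 : 0 ≤ i) (him : i ≤ m - 1)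
    (u : ℤ → ℝ → ℝ)
    (hu : ∀ (j : ℤ) (s : ℝ), u j s = Real.cosh s ^ j * Real.sinh s ^ (2 - n - m))
    (κ : ℤ → ℝ) (hκ : ∀ j : ℤ, κ j = ((m - j - 1) * (m + n - 2 - j) : ℤ))
    (s : ℝ) (hs : 0 < s) :
    0 < chainB n m κ i (i / 2).toNat (u i) s :=
  stmt_7_general n m hn i him u hu κ hκ s hs
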